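/- arXiv:1908.07186 — 2 statements merged into one kernel-verified Lean document; each statement's English description precedes it below -/
import Mathlib

section
/- Let μ be a probability measure on (0,∞), let λ > 0, and let ρ₁ < ρ₂ be real numbers such that 0 < ∫₀^∞ a^{ρ} e^{-λ a} μ(da) < ∞ for ρ ∈ {ρ₁, ρ₂}. Let A be a random variable with law μ_{ρ₁,λ} (the (ρ₁,λ)-tilted law of μ) and let G be an independent random variable with the Gamma(ρ₂-ρ₁) distribution. Then the random variable Y = G / A has Lebesgue density y ↦ y^{ρ₂-ρ₁-1} (∫₀^∞ a^{ρ₂} e^{-(λ+y) a} μ(da)) / (Γ(ρ₂-ρ₁) ∫₀^∞ a^{ρ₁} e^{-λ a} μ(da)) on (0,∞). -/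
open MeasureTheory Set

/-- The `(ρ, x)`-tilted law of a probability measure `μ` on `(0,∞)`:
`μ_{ρ,x}(da) = a^ρ e^{-x a} μ(da) / ∫ a^ρ e^{-x a} μ(da)`. -/
noncomputable def tilt (μ : Measure ℝ) (ρ x : ℝ) : Measure ℝ :=
  μ.withDensity fun a =>
    ENNReal.ofReal (a ^ ρ * Real.exp (-x * a) / ∫ b, b ^ ρ * Real.exp (-x * b) ∂μ)

/-- The Gamma(a) distribution (rate 1), with density `t^{a-1} e^{-t}/Γ(a)` on `(0,∞)`. -/
noncomputable def gammaM (a : ℝ) : Measure ℝ :=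
  volume.withDensity ((Set.Ioi (0 : ℝ)).indicator fun t =>
    ENNReal.ofReal (t ^ (a - 1) * Real.exp (-t) / Real.Gamma a))

/-!
Conditionally on `A = a > 0`, the quotient `G / a` has Lebesgue density `y ↦ a f(a y)`, where `f`
is the density of `G`; integrating over the law of `A` (Tonelli) shows that `Y = G / A` has density
`y ↦ ∫ a f(a y) dP_A(a)`. For the tilted law and the Gamma density, the integrand
`a^{ρ₁} e^{-λa} · a · (ay)^{ρ₂-ρ₁-1} e^{-ay}` collapses to `y^{ρ₂-ρ₁-1} a^{ρ₂} e^{-(λ+y)a}`,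
whose `μ`-integral is the claimed formula.
-/

open scoped ENNReal

lemma lintegral_eq_ofReal_mul_lintegral_comp_mul {a : ℝ} (ha : 0 < a) {H : ℝ → ℝ≥0∞}
    (hH : Measurable H) : ∫⁻ g, H g = ENNReal.ofReal a * ∫⁻ y, H (a * y) := by
  rw [← lintegral_map hH (measurable_const_mul a), Real.map_volume_mul_left ha.ne',
    lintegral_smul_measure, smul_eq_mul, ← mul_assoc, abs_of_pos (inv_pos.mpr ha),
    ← ENNReal.ofReal_mul ha.le, mul_inv_cancel₀ ha.ne', ENNReal.ofReal_one, one_mul]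

lemma map_div_const_withDensity {a : ℝ} (ha : 0 < a) {f : ℝ → ℝ≥0∞} (hf : Measurable f) :
    (volume.withDensity f).map (· / a) =
      volume.withDensity fun y => ENNReal.ofReal a * f (a * y) := by
  ext s hs
  have hdiv : Measurable (· / a : ℝ → ℝ) := measurable_id.div_const a
  rw [Measure.map_apply hdiv hs, withDensity_apply _ (hdiv hs), withDensity_apply _ hs,
    ← lintegral_indicator (hdiv hs), ← lintegral_indicator hs,
    lintegral_eq_ofReal_mul_lintegral_comp_mul ha (hf.indicator (hdiv hs)),
    ← lintegral_const_mul' _ _ ENNReal.ofReal_ne_top]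
  congr 1 with y
  have hmem : a * y ∈ (· / a) ⁻¹' s ↔ y ∈ s := by
    rw [mem_preimage, mul_div_cancel_left₀ y ha.ne']
  by_cases hy : y ∈ s
  · rw [indicator_of_mem (hmem.2 hy), indicator_of_mem hy]
  · rw [indicator_of_notMem (mt hmem.1 hy), indicator_of_notMem hy, mul_zero]

lemma map_div_prod_withDensity {ν : Measure ℝ} [SFinite ν] (hν : ∀ᵐ a ∂ν, 0 < a)
    {f : ℝ → ℝ≥0∞} (hf : Measurable f) :
    (ν.prod (volume.withDensity f)).map (fun p : ℝ × ℝ => p.2 / p.1) =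
      volume.withDensity fun y => ∫⁻ a, ENNReal.ofReal a * f (a * y) ∂ν := by
  ext s hs
  have hdiv : Measurable fun p : ℝ × ℝ => p.2 / p.1 := measurable_snd.div measurable_fst
  have hslice : ∀ a : ℝ, Prod.mk a ⁻¹' ((fun p : ℝ × ℝ => p.2 / p.1) ⁻¹' s) = (· / a) ⁻¹' s :=
    fun _ => rfl
  rw [Measure.map_apply hdiv hs, Measure.prod_apply (hdiv hs), withDensity_apply _ hs]
  calc ∫⁻ a, volume.withDensity f (Prod.mk a ⁻¹' ((fun p : ℝ × ℝ => p.2 / p.1) ⁻¹' s)) ∂ν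
      = ∫⁻ a, (∫⁻ y in s, ENNReal.ofReal a * f (a * y)) ∂ν := by
        refine lintegral_congr_ae (hν.mono fun a ha => ?_)
        dsimp only
        rw [hslice, ← Measure.map_apply (by fun_prop) hs,
          map_div_const_withDensity ha hf, withDensity_apply _ hs]
    _ = ∫⁻ y in s, ∫⁻ a, ENNReal.ofReal a * f (a * y) ∂ν :=
        lintegral_lintegral_swap (by fun_prop)

instance (μ : Measure ℝ) [SFinite μ] (ρ x : ℝ) : SFinite (tilt μ ρ x) := by
  unfold tilt; infer_instance

lemma ae_pos_tilt {μ : Measure ℝ} (hμ : ∀ᵐ a ∂μ, 0 < a) (ρ x : ℝ) :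
    ∀ᵐ a ∂(tilt μ ρ x), 0 < a :=
  (withDensity_absolutelyContinuous _ _).ae_le hμ

lemma integrable_rpow_mul_exp_neg_mul_of_le {μ : Measure ℝ} (hμ : ∀ᵐ a ∂μ, 0 < a)
    {ρ x x' : ℝ} (h : Integrable (fun a => a ^ ρ * Real.exp (-x * a)) μ) (hx : x ≤ x') :
    Integrable (fun a => a ^ ρ * Real.exp (-x' * a)) μ := by
  refine h.mono (by fun_prop) (hμ.mono fun a ha => ?_)
  rw [Real.norm_of_nonneg (by positivity), Real.norm_of_nonneg (by positivity)]
  gcongr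

lemma rpow_mul_exp_mul_gamma_density_eq {a y : ℝ} (ha : 0 < a) (hy : 0 < y) (ρ₁ ρ₂ x Z Γ : ℝ) :
    a ^ ρ₁ * Real.exp (-x * a) / Z *
        (a * ((a * y) ^ (ρ₂ - ρ₁ - 1) * Real.exp (-(a * y)) / Γ)) =
      y ^ (ρ₂ - ρ₁ - 1) / (Γ * Z) * (a ^ ρ₂ * Real.exp (-(x + y) * a)) := by
  have hexp : Real.exp (-(x + y) * a) = Real.exp (-x * a) * Real.exp (-(a * y)) := by
    rw [← Real.exp_add]; ring_nf
  have hpow : a ^ ρ₂ = a ^ ρ₁ * a ^ (ρ₂ - ρ₁ - 1) * a := by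
    rw [← Real.rpow_add ha, ← Real.rpow_add_one ha.ne']; ring_nf
  rw [Real.mul_rpow ha.le hy.le, hexp, hpow]
  ring

lemma lintegral_tilt_mul_gamma_density_comp_mul {μ : Measure ℝ} (hμ : ∀ᵐ a ∂μ, 0 < a)
    {x y ρ₁ ρ₂ : ℝ} (hy : 0 < y) (hρ : ρ₁ < ρ₂)
    (hZ : 0 ≤ ∫ a, a ^ ρ₁ * Real.exp (-x * a) ∂μ)
    (hint : Integrable (fun a => a ^ ρ₂ * Real.exp (-x * a)) μ) :
    ∫⁻ a, ENNReal.ofReal a * (Ioi 0).indicator (fun t => ENNReal.ofReal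
        (t ^ (ρ₂ - ρ₁ - 1) * Real.exp (-t) / Real.Gamma (ρ₂ - ρ₁))) (a * y) ∂(tilt μ ρ₁ x) =
      ENNReal.ofReal (y ^ (ρ₂ - ρ₁ - 1) * (∫ a, a ^ ρ₂ * Real.exp (-(x + y) * a) ∂μ) /
        (Real.Gamma (ρ₂ - ρ₁) * ∫ a, a ^ ρ₁ * Real.exp (-x * a) ∂μ)) := by
  set Z := ∫ a, a ^ ρ₁ * Real.exp (-x * a) ∂μ
  set Γ := Real.Gamma (ρ₂ - ρ₁)
  have hΓ : 0 < Γ := Real.Gamma_pos_of_pos (sub_pos.2 hρ)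
  have hc : 0 ≤ y ^ (ρ₂ - ρ₁ - 1) / (Γ * Z) := by positivity
  have hintegrand : ∀ᵐ a ∂μ, ENNReal.ofReal (a ^ ρ₁ * Real.exp (-x * a) / Z) *
      (ENNReal.ofReal a * (Ioi 0).indicator (fun t => ENNReal.ofReal
        (t ^ (ρ₂ - ρ₁ - 1) * Real.exp (-t) / Γ)) (a * y)) =
      ENNReal.ofReal (y ^ (ρ₂ - ρ₁ - 1) / (Γ * Z)) *
        ENNReal.ofReal (a ^ ρ₂ * Real.exp (-(x + y) * a)) := by
    filter_upwards [hμ] with a ha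
    have hp : 0 ≤ a ^ ρ₁ * Real.exp (-x * a) / Z := by positivity
    rw [indicator_of_mem (mem_Ioi.2 (mul_pos ha hy)), ← ENNReal.ofReal_mul ha.le,
      ← ENNReal.ofReal_mul hp, ← ENNReal.ofReal_mul hc,
      rpow_mul_exp_mul_gamma_density_eq ha hy]
  have hint' : Integrable (fun a => a ^ ρ₂ * Real.exp (-(x + y) * a)) μ :=
    integrable_rpow_mul_exp_neg_mul_of_le hμ hint (by linarith)
  rw [tilt, lintegral_withDensity_eq_lintegral_mul _ (by fun_prop) (by measurability)]
  simp only [Pi.mul_apply]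
  rw [lintegral_congr_ae hintegrand, lintegral_const_mul _ (by fun_prop),
    ← ofReal_integral_eq_lintegral_ofReal hint'
      (hμ.mono fun a ha => by positivity), ← ENNReal.ofReal_mul hc]
  congr 1
  ring

theorem stmt1_general (μ : Measure ℝ) [IsProbabilityMeasure μ] (hμ : μ (Set.Iic 0) = 0)
    (lam ρ₁ ρ₂ : ℝ) (hρ : ρ₁ < ρ₂)
    (h₁pos : 0 < ∫ a, a ^ ρ₁ * Real.exp (-lam * a) ∂μ)
    (h₂int : Integrable (fun a => a ^ ρ₂ * Real.exp (-lam * a)) μ) :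
    Measure.map (fun p : ℝ × ℝ => p.2 / p.1) ((tilt μ ρ₁ lam).prod (gammaM (ρ₂ - ρ₁)))
      = volume.withDensity ((Set.Ioi (0 : ℝ)).indicator fun y =>
          ENNReal.ofReal (y ^ (ρ₂ - ρ₁ - 1) * (∫ a, a ^ ρ₂ * Real.exp (-(lam + y) * a) ∂μ) /
            (Real.Gamma (ρ₂ - ρ₁) * ∫ a, a ^ ρ₁ * Real.exp (-lam * a) ∂μ))) := by
  have hpos : ∀ᵐ a ∂μ, 0 < a := ae_iff.2 (measure_mono_null (fun _ ha => not_lt.1 ha) hμ)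
  have htilt_pos := ae_pos_tilt hpos ρ₁ lam
  rw [gammaM, map_div_prod_withDensity htilt_pos (by measurability)]
  congr 1 with y
  rcases le_or_gt y 0 with hy | hy
  · rw [indicator_of_notMem (notMem_Ioi.2 hy)]
    refine (lintegral_congr_ae (htilt_pos.mono fun a ha => ?_)).trans lintegral_zero
    rw [indicator_of_notMem (notMem_Ioi.2 (mul_nonpos_of_nonneg_of_nonpos ha.le hy)), mul_zero]
  · rw [indicator_of_mem (mem_Ioi.2 hy)]
    exact lintegral_tilt_mul_gamma_density_comp_mul hpos hy hρ h₁pos.le h₂int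

/-- **Density computation in the proof of Proposition 1.** If `A ~ μ_{ρ₁,λ}` and
`G ~ Gamma(ρ₂-ρ₁)` are independent, then `Y = G / A` has the indicated Lebesgue density
on `(0,∞)`. -/
theorem stmt1 (μ : Measure ℝ) [IsProbabilityMeasure μ] (hμ : μ (Set.Iic 0) = 0)
    (lam ρ₁ ρ₂ : ℝ) (hlam : 0 < lam) (hρ : ρ₁ < ρ₂)
    (h₁pos : 0 < ∫ a, a ^ ρ₁ * Real.exp (-lam * a) ∂μ)
    (h₁int : Integrable (fun a => a ^ ρ₁ * Real.exp (-lam * a)) μ)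
    (h₂pos : 0 < ∫ a, a ^ ρ₂ * Real.exp (-lam * a) ∂μ)
    (h₂int : Integrable (fun a => a ^ ρ₂ * Real.exp (-lam * a)) μ) :
    Measure.map (fun p : ℝ × ℝ => p.2 / p.1) ((tilt μ ρ₁ lam).prod (gammaM (ρ₂ - ρ₁)))
      = volume.withDensity ((Set.Ioi (0 : ℝ)).indicator fun y =>
          ENNReal.ofReal (y ^ (ρ₂ - ρ₁ - 1) * (∫ a, a ^ ρ₂ * Real.exp (-(lam + y) * a) ∂μ) /
            (Real.Gamma (ρ₂ - ρ₁) * ∫ a, a ^ ρ₁ * Real.exp (-lam * a) ∂μ))) :=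
  stmt1_general μ hμ lam ρ₁ ρ₂ hρ h₁pos h₂int
end

section
/- Fix α ∈ (0,1) and a > 0. Let β have the Beta(1-α, α) distribution and let R have the Beta(a, 1) distribution, with β and R independent. Then β(1-R)/R has the same distribution as γ_{1-α}/γ_a, the ratio of independent Gamma(1-α) and Gamma(a) random variables; consequently W = (β(1-R)/R + 1)^{-1} has the Beta(a, 1-α) distribution, i.e. 1 - W has the Beta(1-α, a) distribution. -/
/-! For fixed `x > 0` the map `r ↦ x(1-r)/r` sends Beta(a,1) to the density
`a x^a (x+t)^{-(a+1)}` on `t > 0`, and `r ↦ x/r` sends Gamma(q) to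
`x^q t^{-(q+1)} e^{-x/t}/Γ(q)`. Integrating these against the law of the first factor
(Euler's integral `∫₀¹ x^{p-1}(1-x)^{q-1}(x+t)^{-(p+q)} dx = t^{-q}(1+t)^{-p} B(p,q)`, obtained
by the substitution `x = ut/(1+t-u)`, resp. a Gamma integral) shows that both ratios have the
beta-prime density `t^{p-1}(1+t)^{-(p+q)}/B(p,q)` with `p = 1-α`, `q = a`. The substitution
`t ↦ (t+1)⁻¹` turns beta-prime(p,q) into Beta(q,p), and `w ↦ 1-w` swaps the Beta parameters. -/

open MeasureTheory Set

/-- The Beta(a,b) distribution, with density `t^{a-1}(1-t)^{b-1} Γ(a+b)/(Γ(a)Γ(b))`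
on `(0,1)`. -/
noncomputable def betaM (a b : ℝ) : Measure ℝ :=
  volume.withDensity ((Set.Ioo (0 : ℝ) 1).indicator fun t =>
    ENNReal.ofReal (t ^ (a - 1) * (1 - t) ^ (b - 1) * Real.Gamma (a + b) /
      (Real.Gamma a * Real.Gamma b)))

open ProbabilityTheory Function
open scoped ENNReal

theorem map_withDensity_indicator_of_invOn {I J : Set ℝ} (hI : MeasurableSet I)
    (hJ : MeasurableSet J) {T σ σ' : ℝ → ℝ} (hT : Measurable T) (hTI : MapsTo T I J)
    (hσJ : MapsTo σ J I) (hinv : InvOn T σ J I)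
    (hσ' : ∀ t ∈ J, HasDerivWithinAt σ (σ' t) J t) (d : ℝ → ℝ≥0∞) :
    (volume.withDensity (I.indicator d)).map T
      = volume.withDensity (J.indicator fun t => ENNReal.ofReal |σ' t| * d (σ t)) := by
  ext s hs
  have himage : σ '' (s ∩ J) = T ⁻¹' s ∩ I := by
    rw [hinv.1.image_inter', (hinv.bijOn hσJ hTI).image_eq]
  rw [Measure.map_apply hT hs, withDensity_apply _ (hT hs), withDensity_apply _ hs,
    lintegral_indicator hI, lintegral_indicator hJ, Measure.restrict_restrict hI,
    Measure.restrict_restrict hJ, inter_comm I, inter_comm J, ← himage,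
    lintegral_image_eq_lintegral_abs_deriv_mul (hs.inter hJ)
      (fun t ht => (hσ' t ht.2).mono inter_subset_right) (hinv.1.injOn.mono inter_subset_right)]

theorem map_prod_eq_withDensity_lintegral {α β γ : Type*} [MeasurableSpace α]
    [MeasurableSpace β] [MeasureSpace γ] [SFinite (volume : Measure γ)] {μ : Measure α}
    {ν : Measure β} [SFinite μ] [SFinite ν]
    {f : α → β → γ} {g : α → γ → ℝ≥0∞}
    (hslice : ∀ᵐ x ∂μ, ν.map (f x) = volume.withDensity (g x))
    (hf : Measurable fun z : α × β => f z.1 z.2) (hg : Measurable (uncurry g)) :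
    (μ.prod ν).map (fun z => f z.1 z.2) = volume.withDensity fun t => ∫⁻ x, g x t ∂μ := by
  ext s hs
  rw [Measure.map_apply hf hs, Measure.prod_apply (hf hs), withDensity_apply _ hs,
    ← lintegral_lintegral_swap hg.aemeasurable]
  refine lintegral_congr_ae (hslice.mono fun x hx => ?_)
  dsimp only
  rw [← withDensity_apply _ hs, ← hx,
    Measure.map_apply (show Measurable (f x) from hf.comp measurable_prodMk_left) hs]
  rfl

theorem ae_mem_of_withDensity_indicator {α : Type*} [MeasurableSpace α] {μ : Measure α}
    {I : Set α} (hI : MeasurableSet I) (d : α → ℝ≥0∞) :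
    ∀ᵐ x ∂μ.withDensity (I.indicator d), x ∈ I := by
  rw [withDensity_indicator hI]
  exact (withDensity_absolutelyContinuous _ _).ae_le (ae_restrict_mem hI)

theorem lintegral_withDensity_indicator {α : Type*} [MeasurableSpace α] {μ : Measure α}
    {I : Set α} (hI : MeasurableSet I) {d f : α → ℝ≥0∞} (hd : Measurable d) (hf : Measurable f) :
    ∫⁻ x, f x ∂μ.withDensity (I.indicator d) = ∫⁻ x in I, d x * f x ∂μ := by
  rw [withDensity_indicator hI, lintegral_withDensity_eq_lintegral_mul _ hd hf]
  rfl

theorem measurable_uncurry_indicator {α β : Type*} [MeasurableSpace α] [MeasurableSpace β]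
    {s : Set β} (hs : MeasurableSet s) {h : α → β → ℝ≥0∞}
    (hh : Measurable fun z : α × β => h z.1 z.2) :
    Measurable (uncurry fun x => s.indicator (h x)) := by
  have : (uncurry fun x => s.indicator (h x)) = (Prod.snd ⁻¹' s).indicator
      fun z => h z.1 z.2 := rfl
  rw [this]
  exact hh.indicator (measurable_snd hs)

theorem lintegral_Ioo_rpow_mul_one_sub_rpow {p q : ℝ} (hp : 0 < p) (hq : 0 < q) :
    ∫⁻ x in Ioo 0 1, ENNReal.ofReal (x ^ (p - 1) * (1 - x) ^ (q - 1))
      = ENNReal.ofReal (beta p q) := by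
  have hB := beta_pos hp hq
  have h := lintegral_betaPDF_eq_one hp hq
  rw [lintegral_betaPDF] at h
  calc _ = ∫⁻ x in Ioo 0 1, ENNReal.ofReal (beta p q)
        * ENNReal.ofReal (1 / beta p q * x ^ (p - 1) * (1 - x) ^ (q - 1)) := by
        refine setLIntegral_congr_fun measurableSet_Ioo fun x hx => ?_
        have : 0 < 1 - x := by linarith [hx.2]
        rw [← ENNReal.ofReal_mul hB.le]
        field_simp
    _ = _ := by rw [lintegral_const_mul' _ _ ENNReal.ofReal_ne_top, h, mul_one]

theorem lintegral_Ioi_rpow_mul_exp_neg_mul {s r : ℝ} (hs : 0 < s) (hr : 0 < r) :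
    ∫⁻ x in Ioi 0, ENNReal.ofReal (x ^ (s - 1) * Real.exp (-(r * x)))
      = ENNReal.ofReal ((1 / r) ^ s * Real.Gamma s) := by
  have h := Real.integral_rpow_mul_exp_neg_mul_Ioi hs hr
  rw [← h, ofReal_integral_eq_lintegral_ofReal]
  · exact .of_integral_ne_zero (by rw [h]; positivity)
  · filter_upwards [ae_restrict_mem measurableSet_Ioi] with x (hx : 0 < x)
    positivity

theorem lintegral_Ioo_rpow_mul_one_sub_rpow_mul_add_rpow {p q t : ℝ} (hp : 0 < p) (hq : 0 < q)
    (ht : 0 < t) :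
    ∫⁻ x in Ioo 0 1, ENNReal.ofReal (x ^ (p - 1) * (1 - x) ^ (q - 1) * (x + t) ^ (-(p + q)))
      = ENNReal.ofReal (t ^ (-q) * (1 + t) ^ (-p) * beta p q) := by
  set σ : ℝ → ℝ := fun u => u * t / (1 + t - u)
  have hmaps : MapsTo σ (Ioo 0 1) (Ioo 0 1) := fun u ⟨hu0, hu1⟩ => by
    have : 0 < 1 + t - u := by linarith
    exact ⟨by positivity, by rw [div_lt_one this]; nlinarith⟩
  have hmaps' : MapsTo (fun x => x * (1 + t) / (x + t)) (Ioo 0 1) (Ioo 0 1) :=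
    fun x ⟨hx0, hx1⟩ => ⟨by positivity, by rw [div_lt_one (by positivity)]; nlinarith⟩
  have hinv : InvOn (fun x => x * (1 + t) / (x + t)) σ (Ioo 0 1) (Ioo 0 1) := by
    constructor
    · intro u ⟨hu0, hu1⟩
      have : 0 < 1 + t - u := by linarith
      simp only [σ]
      field_simp
      ring
    · intro x ⟨hx0, hx1⟩
      have : 0 < x + t := by positivity
      simp only [σ]
      field_simp
      rw [add_sub_cancel_left, div_self ht.ne']
  have hσ' : ∀ u ∈ Ioo (0 : ℝ) 1,
      HasDerivWithinAt σ (t * (1 + t) / (1 + t - u) ^ 2) (Ioo 0 1) u := by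
    intro u ⟨hu0, hu1⟩
    have hD : 1 + t - u ≠ 0 := by linarith
    have h := (hasDerivAt_mul_const t).div ((hasDerivAt_id' u).const_sub (1 + t)) hD
    exact (h.congr_deriv (by ring)).hasDerivWithinAt
  rw [← (hinv.bijOn hmaps hmaps').image_eq,
    lintegral_image_eq_lintegral_abs_deriv_mul measurableSet_Ioo hσ' hinv.1.injOn,
    ENNReal.ofReal_mul (p := t ^ (-q) * (1 + t) ^ (-p)) (by positivity),
    ← lintegral_Ioo_rpow_mul_one_sub_rpow hp hq, ← lintegral_const_mul' _ _ ENNReal.ofReal_ne_top]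
  refine setLIntegral_congr_fun measurableSet_Ioo fun u ⟨hu0, hu1⟩ => ?_
  have hD : 0 < 1 + t - u := by linarith
  have hv : 0 < 1 - u := by linarith
  have h1 : 1 - σ u = (1 + t) * (1 - u) / (1 + t - u) := by simp only [σ]; field_simp; ring
  have h2 : σ u + t = t * (1 + t) / (1 + t - u) := by simp only [σ]; field_simp; ring
  rw [h1, h2, abs_of_pos (by positivity), ← ENNReal.ofReal_mul (by positivity),
    ← ENNReal.ofReal_mul (by positivity)]
  congr 1
  simp (disch := positivity) only [σ, Real.div_rpow, Real.mul_rpow, Real.rpow_neg,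
    Real.rpow_sub_one, Real.rpow_add]
  field_simp

noncomputable def betaPrimeM (p q : ℝ) : Measure ℝ :=
  volume.withDensity ((Ioi (0 : ℝ)).indicator fun t =>
    ENNReal.ofReal (t ^ (p - 1) * (1 + t) ^ (-(p + q)) * Real.Gamma (p + q) /
      (Real.Gamma p * Real.Gamma q)))

instance (p q : ℝ) : SFinite (betaM p q) := by unfold betaM; infer_instance

instance (a : ℝ) : SFinite (gammaM a) := by unfold gammaM; infer_instance

theorem ae_mem_Ioo_betaM (p q : ℝ) : ∀ᵐ x ∂betaM p q, x ∈ Ioo 0 1 :=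
  ae_mem_of_withDensity_indicator measurableSet_Ioo _

theorem ae_mem_Ioi_gammaM (a : ℝ) : ∀ᵐ x ∂gammaM a, x ∈ Ioi 0 :=
  ae_mem_of_withDensity_indicator measurableSet_Ioi _

theorem map_one_sub_betaM (p q : ℝ) : (betaM p q).map (fun t => 1 - t) = betaM q p := by
  have hmaps : MapsTo (fun t : ℝ => 1 - t) (Ioo 0 1) (Ioo 0 1) :=
    fun t ⟨h0, h1⟩ => ⟨by linarith, by linarith⟩
  rw [betaM, map_withDensity_indicator_of_invOn measurableSet_Ioo measurableSet_Ioo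
    (by fun_prop) hmaps hmaps ⟨fun t _ => sub_sub_cancel 1 t, fun t _ => sub_sub_cancel 1 t⟩
    (fun t _ => ((hasDerivAt_id' t).const_sub 1).hasDerivWithinAt), betaM]
  refine congrArg _ (indicator_congr fun t _ => ?_)
  rw [abs_neg, abs_one, ENNReal.ofReal_one, one_mul, sub_sub_cancel, add_comm q,
    mul_comm (Real.Gamma q)]
  ring_nf

theorem map_inv_add_one_betaPrimeM (p q : ℝ) :
    (betaPrimeM p q).map (fun t => (t + 1)⁻¹) = betaM q p := by
  have hmaps : MapsTo (fun t : ℝ => (t + 1)⁻¹) (Ioi 0) (Ioo 0 1) := fun t (ht : 0 < t) =>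
    ⟨by positivity, inv_lt_one_of_one_lt₀ (by linarith)⟩
  have hmaps' : MapsTo (fun w : ℝ => w⁻¹ - 1) (Ioo 0 1) (Ioi 0) := fun w ⟨h0, h1⟩ =>
    sub_pos.2 (one_lt_inv₀ h0 |>.2 h1)
  rw [betaPrimeM, map_withDensity_indicator_of_invOn measurableSet_Ioi measurableSet_Ioo
    (by fun_prop) hmaps hmaps' ⟨fun w _ => by simp, fun t _ => by simp⟩
    (fun w hw => ((hasDerivAt_inv hw.1.ne').sub_const 1).hasDerivWithinAt), betaM]
  refine congrArg _ (indicator_congr fun w ⟨h0, h1⟩ => ?_)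
  have hv : 0 < 1 - w := by linarith
  rw [← ENNReal.ofReal_mul (by positivity), show w⁻¹ - 1 = (1 - w) / w by field_simp,
    show 1 + (1 - w) / w = w⁻¹ by field_simp; ring, abs_neg, abs_of_pos (by positivity),
    add_comm q, mul_comm (Real.Gamma q)]
  congr 1
  simp (disch := positivity) only [Real.div_rpow, Real.inv_rpow, Real.rpow_neg,
    Real.rpow_sub_one, Real.rpow_add]
  field_simp

theorem map_mul_one_sub_div_betaM_one {a x : ℝ} (ha : 0 < a) (hx : 0 < x) :
    (betaM a 1).map (fun r => x * (1 - r) / r)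
      = volume.withDensity ((Ioi 0).indicator fun t =>
          ENNReal.ofReal (a * x ^ a * (x + t) ^ (-(a + 1)))) := by
  have hmaps : MapsTo (fun r => x * (1 - r) / r) (Ioo 0 1) (Ioi 0) := fun r ⟨h0, h1⟩ => by
    have : 0 < 1 - r := by linarith
    exact div_pos (mul_pos hx this) h0
  have hmaps' : MapsTo (fun t => x / (x + t)) (Ioi 0) (Ioo 0 1) := fun t (ht : 0 < t) =>
    ⟨by positivity, (div_lt_one (by positivity)).2 (by linarith)⟩
  have hinv : InvOn (fun r => x * (1 - r) / r) (fun t => x / (x + t)) (Ioi 0) (Ioo 0 1) := by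
    constructor
    · intro t (ht : 0 < t)
      field_simp
      ring
    · intro r ⟨h0, h1⟩
      have : 0 < 1 - r := by linarith
      field_simp
      ring
  have hσ' : ∀ t ∈ Ioi (0 : ℝ),
      HasDerivWithinAt (fun t => x / (x + t)) (-(x / (x + t) ^ 2)) (Ioi 0) t := by
    intro t (ht : 0 < t)
    have h := ((hasDerivAt_id' t).const_add x).inv (by positivity : x + t ≠ 0) |>.const_mul x
    exact (h.congr_deriv (by ring)).hasDerivWithinAt
  rw [betaM, map_withDensity_indicator_of_invOn measurableSet_Ioo measurableSet_Ioi
    (by fun_prop) hmaps hmaps' hinv hσ']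
  refine congrArg _ (indicator_congr fun t (ht : 0 < t) => ?_)
  rw [← ENNReal.ofReal_mul (by positivity), abs_neg, abs_of_pos (by positivity), sub_self,
    Real.rpow_zero, Real.Gamma_one, Real.Gamma_add_one ha.ne']
  congr 1
  simp (disch := positivity) only [Real.div_rpow, Real.rpow_neg, Real.rpow_sub_one,
    Real.rpow_add_one]
  field_simp

theorem map_div_gammaM {a x : ℝ} (hx : 0 < x) :
    (gammaM a).map (fun r => x / r)
      = volume.withDensity ((Ioi 0).indicator fun t =>
          ENNReal.ofReal (x ^ a * t ^ (-(a + 1)) * Real.exp (-(x / t)) / Real.Gamma a)) := by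
  have hmaps : MapsTo (fun r => x / r) (Ioi 0) (Ioi 0) := fun r (hr : 0 < r) => div_pos hx hr
  have hinv : InvOn (fun r => x / r) (fun r => x / r) (Ioi 0) (Ioi 0) :=
    ⟨fun _ _ => div_div_cancel₀ hx.ne', fun _ _ => div_div_cancel₀ hx.ne'⟩
  have hσ' : ∀ t ∈ Ioi (0 : ℝ),
      HasDerivWithinAt (fun t => x / t) (-(x / t ^ 2)) (Ioi 0) t := by
    intro t (ht : 0 < t)
    have h := (hasDerivAt_inv ht.ne').const_mul x
    exact (h.congr_deriv (by ring)).hasDerivWithinAt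
  rw [gammaM, map_withDensity_indicator_of_invOn measurableSet_Ioi measurableSet_Ioi
    (by fun_prop) hmaps hmaps hinv hσ']
  refine congrArg _ (indicator_congr fun t (ht : 0 < t) => ?_)
  rw [← ENNReal.ofReal_mul (by positivity), abs_neg, abs_of_pos (by positivity)]
  congr 1
  simp (disch := positivity) only [Real.div_rpow, Real.rpow_neg, Real.rpow_sub_one,
    Real.rpow_add_one]
  field_simp

theorem map_div_prod_gammaM {p q : ℝ} (hp : 0 < p) (hq : 0 < q) :
    ((gammaM p).prod (gammaM q)).map (fun z => z.1 / z.2) = betaPrimeM p q := by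
  have hslices := (ae_mem_Ioi_gammaM p).mono fun x hx => map_div_gammaM (a := q) hx
  rw [map_prod_eq_withDensity_lintegral hslices (by fun_prop)
    (measurable_uncurry_indicator measurableSet_Ioi (by fun_prop)), betaPrimeM]
  congr 1
  funext t
  by_cases ht : 0 < t
  swap
  · simp [indicator_of_notMem, ht]
  simp only [indicator_of_mem (show t ∈ Ioi 0 from ht)]
  have hc : 0 < 1 + 1 / t := by positivity
  have hslice : ∀ x ∈ Ioi (0 : ℝ),
      ENNReal.ofReal (x ^ (p - 1) * Real.exp (-x) / Real.Gamma p)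
        * ENNReal.ofReal (x ^ q * t ^ (-(q + 1)) * Real.exp (-(x / t)) / Real.Gamma q)
      = ENNReal.ofReal (t ^ (-(q + 1)) / (Real.Gamma p * Real.Gamma q))
        * ENNReal.ofReal (x ^ (p + q - 1) * Real.exp (-((1 + 1 / t) * x))) := by
    intro x (hx : 0 < x)
    rw [← ENNReal.ofReal_mul (by positivity), ← ENNReal.ofReal_mul (by positivity)]
    congr 1
    rw [show -((1 + 1 / t) * x) = -x + -(x / t) by ring, Real.exp_add]
    simp (disch := positivity) only [Real.rpow_neg, Real.rpow_sub_one, Real.rpow_add]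
    field_simp
  rw [gammaM, lintegral_withDensity_indicator measurableSet_Ioi (by fun_prop) (by fun_prop),
    setLIntegral_congr_fun measurableSet_Ioi hslice,
    lintegral_const_mul' _ _ ENNReal.ofReal_ne_top,
    lintegral_Ioi_rpow_mul_exp_neg_mul (add_pos hp hq) hc, ← ENNReal.ofReal_mul (by positivity),
    show 1 / (1 + 1 / t) = t / (1 + t) by field_simp; ring]
  congr 1
  simp (disch := positivity) only [Real.div_rpow, Real.rpow_neg, Real.rpow_sub_one,
    Real.rpow_add, Real.rpow_one]
  field_simp

theorem map_mul_one_sub_div_prod_betaM {p q a : ℝ} (hp : 0 < p) (hq : 0 < q) (hpq : p + q = 1)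
    (ha : 0 < a) :
    ((betaM p q).prod (betaM a 1)).map (fun z => z.1 * (1 - z.2) / z.2) = betaPrimeM p a := by
  have hslices := (ae_mem_Ioo_betaM p q).mono fun x hx => map_mul_one_sub_div_betaM_one ha hx.1
  rw [map_prod_eq_withDensity_lintegral hslices (by fun_prop)
    (measurable_uncurry_indicator measurableSet_Ioi (by fun_prop)), betaPrimeM]
  congr 1
  funext t
  by_cases ht : 0 < t
  swap
  · simp [indicator_of_notMem, ht]
  simp only [indicator_of_mem (show t ∈ Ioi 0 from ht)]
  -- `p + q = 1` is what turns the exponent `-(a + 1)` into the `-(P + Q)` of Euler's integral.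
  obtain rfl : q = 1 - p := by linarith
  have hslice : ∀ x ∈ Ioo (0 : ℝ) 1,
      ENNReal.ofReal (x ^ (p - 1) * (1 - x) ^ (1 - p - 1) * Real.Gamma (p + (1 - p)) /
          (Real.Gamma p * Real.Gamma (1 - p)))
        * ENNReal.ofReal (a * x ^ a * (x + t) ^ (-(a + 1)))
      = ENNReal.ofReal (a / (Real.Gamma p * Real.Gamma (1 - p)))
        * ENNReal.ofReal (x ^ (p + a - 1) * (1 - x) ^ (1 - p - 1)
          * (x + t) ^ (-(p + a + (1 - p)))) := by
    intro x ⟨hx0, hx1⟩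
    have : 0 < 1 - x := by linarith
    rw [← ENNReal.ofReal_mul (by positivity), ← ENNReal.ofReal_mul (by positivity),
      add_sub_cancel, Real.Gamma_one, show p + a + (1 - p) = a + 1 by ring]
    congr 1
    simp (disch := positivity) only [Real.rpow_sub_one, Real.rpow_add]
    field_simp
  rw [betaM, lintegral_withDensity_indicator measurableSet_Ioo (by fun_prop) (by fun_prop),
    setLIntegral_congr_fun measurableSet_Ioo hslice,
    lintegral_const_mul' _ _ ENNReal.ofReal_ne_top,
    lintegral_Ioo_rpow_mul_one_sub_rpow_mul_add_rpow (add_pos hp ha) hq ht,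
    ← ENNReal.ofReal_mul (by positivity), beta, show p + a + (1 - p) = a + 1 by ring,
    Real.Gamma_add_one ha.ne']
  congr 1
  simp (disch := positivity) only [Real.rpow_neg, Real.rpow_sub, Real.rpow_add, Real.rpow_one]
  field_simp

/-- **Corollary (Section 4, recovering GEM(α,θ)).** For independent `β ~ Beta(1-α,α)`
and `R ~ Beta(a,1)`: `β(1-R)/R =_d γ_{1-α}/γ_a` (a ratio of independent Gamma
variables); consequently `W = (β(1-R)/R + 1)⁻¹ ~ Beta(a, 1-α)`, i.e.
`1 - W ~ Beta(1-α, a)`. -/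
theorem stmt18 (α a : ℝ) (hα : α ∈ Set.Ioo (0 : ℝ) 1) (ha : 0 < a) :
    (Measure.map (fun p : ℝ × ℝ => p.1 * (1 - p.2) / p.2)
        ((betaM (1 - α) α).prod (betaM a 1))
      = Measure.map (fun q : ℝ × ℝ => q.1 / q.2) ((gammaM (1 - α)).prod (gammaM a))) ∧
    (Measure.map (fun p : ℝ × ℝ => (p.1 * (1 - p.2) / p.2 + 1)⁻¹)
        ((betaM (1 - α) α).prod (betaM a 1))
      = betaM a (1 - α)) ∧
    (Measure.map (fun p : ℝ × ℝ => 1 - (p.1 * (1 - p.2) / p.2 + 1)⁻¹)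
        ((betaM (1 - α) α).prod (betaM a 1))
      = betaM (1 - α) a) := by
  obtain ⟨hα0, hα1⟩ := hα
  have hratio := map_mul_one_sub_div_prod_betaM (sub_pos.2 hα1) hα0 (sub_add_cancel 1 α) ha
  have hW : Measure.map (fun p : ℝ × ℝ => (p.1 * (1 - p.2) / p.2 + 1)⁻¹)
      ((betaM (1 - α) α).prod (betaM a 1)) = betaM a (1 - α) := by
    rw [← map_inv_add_one_betaPrimeM (1 - α) a, ← hratio,
      Measure.map_map (by fun_prop) (by fun_prop)]
    rfl
  refine ⟨hratio.trans (map_div_prod_gammaM (sub_pos.2 hα1) ha).symm, hW, ?_⟩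
  rw [← map_one_sub_betaM a (1 - α), ← hW, Measure.map_map (by fun_prop) (by fun_prop)]
  rfl
end
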